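/- Let T be a finite lattice and k a commutative ring. The element e = − Σ_{B ∈ 𝒵_T} μ(B, ∞) · α_B of the algebra End_{kL}(T) is idempotent: e² = e. -/

import Mathlib

attribute [local instance] Classical.propDecidable
attribute [local instance] Fintype.toLocallyFiniteOrder
local instance {X : Type*} [Fintype X] : Fintype (WithTop X) :=
  inferInstanceAs (Fintype (Option X))

open IncidenceAlgebra

/-- `alphaB B t = min { b ∈ B | b ≥ t }`, as an endomorphism of `T`. -/
noncomputable def alphaB {T : Type*} [Lattice T] [Fintype T] [BoundedOrder T]
    (B : Finset T) : Function.End T :=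
  fun t => (B.filter fun b => t ≤ b).inf id

set_option linter.unusedSectionVars false

open Finset

section Aux
variable {T : Type*} [Lattice T] [Fintype T] [BoundedOrder T]

lemma chain_inf_mem {s : Finset T} (hs : IsChain (· ≤ ·) (s : Set T)) (hne : s.Nonempty) :
    s.inf id ∈ s := by
  obtain ⟨m, hm, hmin⟩ := s.exists_minimal hne
  have hleast : ∀ x ∈ s, m ≤ x := by
    intro x hx
    rcases eq_or_ne x m with rfl | hne'
    · exact le_rfl
    · rcases hs hx hm hne' with h | h
      · exact absurd (le_antisymm h (hmin hx h)) hne'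
      · exact h
  have h : s.inf id = m := le_antisymm (Finset.inf_le hm) (Finset.le_inf hleast)
  rw [h]; exact hm

variable {C : Finset T} {t : T}

lemma alphaB_mem_filter (hC : IsChain (· ≤ ·) (C : Set T)) (hT : ⊤ ∈ C) :
    alphaB C t ∈ C.filter fun b => t ≤ b := by
  apply chain_inf_mem
  · exact IsChain.mono (by intro x hx; simpa using (Finset.mem_filter.1 (by simpa using hx)).1) hC
  · exact ⟨⊤, Finset.mem_filter.2 ⟨hT, le_top⟩⟩

lemma alphaB_mem (hC : IsChain (· ≤ ·) (C : Set T)) (hT : ⊤ ∈ C) : alphaB C t ∈ C :=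
  (Finset.mem_filter.1 (alphaB_mem_filter hC hT)).1

lemma le_alphaB (hC : IsChain (· ≤ ·) (C : Set T)) (hT : ⊤ ∈ C) : t ≤ alphaB C t :=
  (Finset.mem_filter.1 (alphaB_mem_filter hC hT)).2

lemma alphaB_le {c : T} (hc : c ∈ C) (htc : t ≤ c) : alphaB C t ≤ c :=
  Finset.inf_le (Finset.mem_filter.2 ⟨hc, htc⟩)

lemma alphaB_fixed (hC : IsChain (· ≤ ·) (C : Set T)) (hT : ⊤ ∈ C) {c : T} (hc : c ∈ C) :
    alphaB C c = c :=
  le_antisymm (alphaB_le hc le_rfl) (le_alphaB hC hT)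

end Aux


section AuxB
variable {T : Type*} [Lattice T] [Fintype T] [BoundedOrder T]

abbrev ChP (T : Type*) [Lattice T] [Fintype T] [BoundedOrder T] :=
  {A : Finset T // IsChain (· ≤ ·) (A : Set T) ∧ ⊥ ∈ A}

noncomputable def MuZ (C : Finset T) : ℤ :=
  if h : IsChain (· ≤ ·) (C : Set T) ∧ ⊥ ∈ C then
    mu ℤ ((⟨C, h⟩ : ChP T) : WithTop (ChP T)) ⊤ else 0

lemma MuZ_coe (x : ChP T) : MuZ (x : Finset T) = mu ℤ (x : WithTop (ChP T)) ⊤ := by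
  rw [MuZ, dif_pos x.2]

lemma sum_superchains {A : Finset T} (hA : IsChain (· ≤ ·) (A : Set T)) (hbot : ⊥ ∈ A) :
    ∑ C ∈ univ.filter (fun C : Finset T => IsChain (· ≤ ·) (C : Set T) ∧ A ⊆ C), MuZ C = -1 := by
  set W : ChP T := ⟨A, hA, hbot⟩ with hW
  have key : ∑ x ∈ Icc (W : WithTop (ChP T)) ⊤, mu ℤ x ⊤ = 0 := by
    rw [sum_Icc_mu_left, if_neg (by exact WithTop.coe_ne_top)]
  have hIcc : Icc (W : WithTop (ChP T)) ⊤
      = univ.filter (fun x => (W : WithTop (ChP T)) ≤ x) := by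
    ext x; simp [le_top]
  rw [hIcc, Finset.sum_filter] at key
  have hopt : ∑ x : WithTop (ChP T), (if (W : WithTop (ChP T)) ≤ x then mu ℤ x ⊤ else 0)
      = (if (W : WithTop (ChP T)) ≤ ⊤ then mu ℤ (⊤ : WithTop (ChP T)) ⊤ else 0)
        + ∑ x : ChP T, (if (W : WithTop (ChP T)) ≤ ↑x then mu ℤ (↑x : WithTop (ChP T)) ⊤ else 0) :=
    Fintype.sum_option _
  rw [hopt, if_pos le_top, mu_self] at key
  -- now: 1 + ∑ x : ChP T, ... = 0
  have hsub : ∑ x : ChP T, (if (W : WithTop (ChP T)) ≤ ↑x then mu ℤ (↑x : WithTop (ChP T)) ⊤ else 0)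
      = ∑ C ∈ univ.filter (fun C : Finset T => IsChain (· ≤ ·) (C : Set T) ∧ A ⊆ C), MuZ C := by
    have h1 : ∀ x : ChP T, (if (W : WithTop (ChP T)) ≤ ↑x then mu ℤ (↑x : WithTop (ChP T)) ⊤ else 0)
        = (fun C : Finset T => if A ⊆ C then MuZ C else 0) ↑x := by
      intro x
      have : ((W : WithTop (ChP T)) ≤ ↑x) ↔ A ⊆ (x : Finset T) := by
        rw [WithTop.coe_le_coe]
        rfl
      simp only [this, ← MuZ_coe]
    rw [Finset.sum_congr rfl (fun x _ => h1 x)]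
    rw [← Finset.sum_subtype (univ.filter (fun C : Finset T => IsChain (· ≤ ·) (C : Set T) ∧ ⊥ ∈ C))
        (by intro x; simp) (fun C : Finset T => if A ⊆ C then MuZ C else 0)]
    rw [Finset.sum_filter, Finset.sum_filter]
    refine Finset.sum_congr rfl fun C _ => ?_
    by_cases h1 : IsChain (· ≤ ·) (C : Set T)
    · by_cases h2 : A ⊆ C
      · simp [h1, h2, h2 hbot]
      · simp [h1, h2]
    · simp [h1]
  rw [hsub] at key
  linarith
end AuxB


open IncidenceAlgebra Finset

set_option linter.unusedSectionVars false

section Aux2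
variable {T : Type*} [Lattice T] [Fintype T] [BoundedOrder T]

lemma IE {A U : Finset T} (hA : IsChain (· ≤ ·) (A : Set T)) (hbot : ⊥ ∈ A) :
    ∑ C ∈ univ.filter (fun C : Finset T =>
        IsChain (· ≤ ·) (C : Set T) ∧ A ⊆ C ∧ C ⊆ U), MuZ C
    = - ∑ F ∈ (univ \ U : Finset T).powerset.filter
        (fun F => IsChain (· ≤ ·) ((A ∪ F : Finset T) : Set T)), (-1 : ℤ) ^ F.card := by
  classical
  set V := (univ \ U : Finset T) with hV
  have swap : ∑ C ∈ univ.filter (fun C : Finset T => IsChain (· ≤ ·) (C : Set T) ∧ A ⊆ C),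
        ∑ F ∈ V.powerset, (if F ⊆ C then ((-1 : ℤ) ^ F.card) else 0) * MuZ C
      = ∑ F ∈ V.powerset,
        ∑ C ∈ univ.filter (fun C : Finset T => IsChain (· ≤ ·) (C : Set T) ∧ A ⊆ C),
          (if F ⊆ C then ((-1 : ℤ) ^ F.card) else 0) * MuZ C := Finset.sum_comm
  -- LHS computation
  have lhs_eq : ∑ C ∈ univ.filter (fun C : Finset T => IsChain (· ≤ ·) (C : Set T) ∧ A ⊆ C),
        ∑ F ∈ V.powerset, (if F ⊆ C then ((-1 : ℤ) ^ F.card) else 0) * MuZ C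
      = ∑ C ∈ univ.filter (fun C : Finset T =>
          IsChain (· ≤ ·) (C : Set T) ∧ A ⊆ C ∧ C ⊆ U), MuZ C := by
    have h1 : ∀ C : Finset T,
        (∑ F ∈ V.powerset, (if F ⊆ C then ((-1 : ℤ) ^ F.card) else 0) * MuZ C)
        = (if C ⊆ U then 1 else 0) * MuZ C := by
      intro C
      rw [← Finset.sum_mul]
      congr 1
      have h2 : ∑ F ∈ V.powerset, (if F ⊆ C then ((-1 : ℤ) ^ F.card) else 0)
          = ∑ F ∈ (V ∩ C).powerset, (-1 : ℤ) ^ F.card := by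
        rw [← Finset.sum_filter]
        congr 1
        ext F
        simp only [Finset.mem_filter, Finset.mem_powerset, Finset.subset_inter_iff]
      rw [h2, sum_powerset_neg_one_pow_card]
      congr 1
      simp only [eq_iff_iff]
      constructor
      · intro h x hx
        by_contra hxU
        have : x ∈ V ∩ C := by simp [hV, hx, hxU]
        simp [h] at this
      · intro h
        ext x
        simp only [Finset.mem_inter, Finset.notMem_empty, iff_false, hV, Finset.mem_sdiff]
        rintro ⟨⟨-, hxU⟩, hxC⟩
        exact hxU (h hxC)
    rw [Finset.sum_congr rfl fun C _ => h1 C]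
    rw [Finset.sum_filter]
    conv_rhs => rw [Finset.sum_filter]
    refine Finset.sum_congr rfl fun C _ => ?_
    by_cases hc : IsChain (· ≤ ·) (C : Set T) <;> by_cases ha : A ⊆ C <;>
      by_cases hu : C ⊆ U <;> simp [hc, ha, hu]
  -- RHS computation
  have rhs_eq : ∑ F ∈ V.powerset,
        ∑ C ∈ univ.filter (fun C : Finset T => IsChain (· ≤ ·) (C : Set T) ∧ A ⊆ C),
          (if F ⊆ C then ((-1 : ℤ) ^ F.card) else 0) * MuZ C
      = - ∑ F ∈ V.powerset.filter
          (fun F => IsChain (· ≤ ·) ((A ∪ F : Finset T) : Set T)), (-1 : ℤ) ^ F.card := by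
    have h1 : ∀ F : Finset T,
        (∑ C ∈ univ.filter (fun C : Finset T => IsChain (· ≤ ·) (C : Set T) ∧ A ⊆ C),
          (if F ⊆ C then ((-1 : ℤ) ^ F.card) else 0) * MuZ C)
        = (if IsChain (· ≤ ·) ((A ∪ F : Finset T) : Set T) then -(-1 : ℤ) ^ F.card else 0) := by
      intro F
      have e1 : ∀ C ∈ univ.filter (fun C : Finset T => IsChain (· ≤ ·) (C : Set T) ∧ A ⊆ C),
          (if F ⊆ C then ((-1 : ℤ) ^ F.card) else 0) * MuZ C
          = (-1 : ℤ) ^ F.card * (if F ⊆ C then MuZ C else 0) := by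
        intro C _
        by_cases h : F ⊆ C <;> simp [h, mul_comm]
      rw [Finset.sum_congr rfl e1, ← Finset.mul_sum]
      by_cases hch : IsChain (· ≤ ·) ((A ∪ F : Finset T) : Set T)
      · rw [if_pos hch]
        have e2 : ∑ C ∈ univ.filter (fun C : Finset T =>
              IsChain (· ≤ ·) (C : Set T) ∧ A ⊆ C), (if F ⊆ C then MuZ C else 0)
            = ∑ C ∈ univ.filter (fun C : Finset T =>
              IsChain (· ≤ ·) (C : Set T) ∧ (A ∪ F) ⊆ C), MuZ C := by
          rw [Finset.sum_filter]
          conv_rhs => rw [Finset.sum_filter]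
          refine Finset.sum_congr rfl fun C _ => ?_
          by_cases hc : IsChain (· ≤ ·) (C : Set T) <;> by_cases ha : A ⊆ C <;>
            by_cases hf : F ⊆ C <;>
            simp [hc, ha, hf, Finset.union_subset_iff]
        rw [e2, sum_superchains hch (Finset.mem_union_left _ hbot)]
        ring
      · rw [if_neg hch]
        refine mul_eq_zero_of_right _ (Finset.sum_eq_zero ?_)
        intro C hC
        simp only [Finset.mem_filter] at hC
        rw [if_neg]
        intro hFC
        exact hch (IsChain.mono (by
          rw [Finset.coe_subset]
          exact Finset.union_subset hC.2.2 hFC) hC.2.1)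
    rw [Finset.sum_congr rfl fun F _ => h1 F]
    rw [Finset.sum_filter, ← Finset.sum_neg_distrib]
    refine Finset.sum_congr rfl fun F _ => ?_
    split_ifs <;> ring
  rw [← lhs_eq, swap, rhs_eq]

lemma toggle {A V : Finset T} {b0 : T} (hb0 : b0 ∈ V) (hcomp : ∀ c ∈ V, b0 ≤ c)
    (hA : ∀ a ∈ A, a ≤ b0 ∨ b0 ≤ a) :
    ∑ F ∈ V.powerset.filter
        (fun F => IsChain (· ≤ ·) ((A ∪ F : Finset T) : Set T)), (-1 : ℤ) ^ F.card = 0 := by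
  classical
  refine Finset.sum_involution
    (fun F _ => if b0 ∈ F then F.erase b0 else insert b0 F) ?_ ?_ ?_ ?_
  · -- cancellation
    intro F hF
    by_cases h : b0 ∈ F
    · simp only [h, if_true]
      rw [← Finset.card_erase_add_one h]
      ring
    · simp only [h, if_false]
      rw [Finset.card_insert_of_notMem h]
      ring
  · -- ne
    intro F hF _
    by_cases h : b0 ∈ F
    · simp only [h, if_true]
      intro hcon
      have := Finset.notMem_erase b0 F
      rw [hcon] at this
      exact this h
    · simp only [h, if_false]
      intro hcon
      have := Finset.mem_insert_self b0 F
      rw [hcon] at this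
      exact h this
  · -- mem
    intro F hF
    simp only [Finset.mem_filter, Finset.mem_powerset] at hF ⊢
    obtain ⟨hFV, hFch⟩ := hF
    by_cases h : b0 ∈ F
    · simp only [h, if_true]
      refine ⟨(Finset.erase_subset _ _).trans hFV, ?_⟩
      exact IsChain.mono (by
        rw [Finset.coe_subset]
        exact Finset.union_subset_union_right (Finset.erase_subset _ _)) hFch
    · simp only [h, if_false]
      refine ⟨Finset.insert_subset hb0 hFV, ?_⟩
      rw [Finset.union_insert, Finset.coe_insert]
      refine hFch.insert ?_
      intro b hb _
      rw [Finset.mem_coe, Finset.mem_union] at hb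
      rcases hb with hb | hb
      · exact (hA b hb).symm
      · exact Or.inl (hcomp b (hFV hb))
  · -- involutive
    intro F hF
    by_cases h : b0 ∈ F
    · simp [h, Finset.notMem_erase, Finset.insert_erase h]
    · simp [h, Finset.mem_insert_self, Finset.erase_insert h]
end Aux2
section Aux3
variable {T : Type*} [Lattice T] [Fintype T] [BoundedOrder T]

lemma End_mul_apply (f g : Function.End T) (t : T) : (f * g) t = f (g t) := rfl

lemma alphaB_idem {B : Finset T} (hB : IsChain (· ≤ ·) (B : Set T)) (htB : ⊤ ∈ B) :
    alphaB B * alphaB B = alphaB B := by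
  funext t
  exact alphaB_fixed hB htB (alphaB_mem hB htB)

lemma fiber_sum {B : Finset T} (hB : IsChain (· ≤ ·) (B : Set T)) (hbB : ⊥ ∈ B) (htB : ⊤ ∈ B)
    (f : Function.End T) :
    ∑ C ∈ univ.filter (fun C : Finset T =>
        (IsChain (· ≤ ·) (C : Set T) ∧ ⊥ ∈ C ∧ ⊤ ∈ C) ∧ alphaB C * alphaB B = f), MuZ C
    = if f = alphaB B then -1 else 0 := by
  classical
  by_cases hex : ∃ C0 : Finset T,
      (IsChain (· ≤ ·) ((C0 : Finset T) : Set T) ∧ ⊥ ∈ C0 ∧ ⊤ ∈ C0) ∧ alphaB C0 * alphaB B = f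
  swap
  · -- empty fiber
    have h0 : univ.filter (fun C : Finset T =>
        (IsChain (· ≤ ·) (C : Set T) ∧ ⊥ ∈ C ∧ ⊤ ∈ C) ∧ alphaB C * alphaB B = f) = ∅ := by
      rw [Finset.filter_eq_empty_iff]
      intro C _
      exact fun h => hex ⟨C, h⟩
    rw [h0, Finset.sum_empty, if_neg]
    intro hf
    exact hex ⟨B, ⟨hB, hbB, htB⟩, by rw [alphaB_idem hB htB, hf]⟩
  obtain ⟨C0, ⟨hC0, hbC0, htC0⟩, hC0f⟩ := hex
  -- basic facts about f
  have hfB : ∀ b ∈ B, f b = alphaB C0 b := by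
    intro b hb
    rw [← hC0f, End_mul_apply, alphaB_fixed hB htB hb]
  have hfge : ∀ b ∈ B, b ≤ f b := by
    intro b hb
    rw [hfB b hb]
    exact le_alphaB hC0 htC0
  have hfmono : ∀ b1 ∈ B, ∀ b2 ∈ B, b1 ≤ b2 → f b1 ≤ f b2 := by
    intro b1 hb1 b2 hb2 h
    rw [hfB b1 hb1, hfB b2 hb2]
    exact alphaB_le (alphaB_mem hC0 htC0) (h.trans (le_alphaB hC0 htC0))
  have hfbot : f ⊥ = ⊥ := by
    rw [hfB ⊥ hbB]
    exact le_bot_iff.1 (alphaB_le hbC0 le_rfl)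
  have hftop : f ⊤ = ⊤ := by
    rw [hfB ⊤ htB]
    exact le_antisymm le_top (le_alphaB hC0 htC0)
  have hfix : ∀ t : T, f (alphaB B t) = f t := by
    intro t
    rw [← hC0f]
    simp only [End_mul_apply]
    rw [alphaB_fixed hB htB (alphaB_mem hB htB)]
  set A : Finset T := B.image (fun b => f b) with hAdef
  set U : Finset T := univ.filter (fun c => ∀ b ∈ B, b ≤ c → f b ≤ c) with hUdef
  have hbotA : ⊥ ∈ A := by
    rw [hAdef, Finset.mem_image]
    exact ⟨⊥, hbB, hfbot⟩
  have htopA : ⊤ ∈ A := by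
    rw [hAdef, Finset.mem_image]
    exact ⟨⊤, htB, hftop⟩
  have hAchain : IsChain (· ≤ ·) (A : Set T) := by
    intro x hx y hy hxy
    rw [hAdef, Finset.coe_image] at hx hy
    obtain ⟨b1, hb1, rfl⟩ := hx
    obtain ⟨b2, hb2, rfl⟩ := hy
    rw [Finset.mem_coe] at hb1 hb2
    rcases eq_or_ne b1 b2 with rfl | hne
    · exact absurd rfl hxy
    · rcases hB (Finset.mem_coe.2 hb1) (Finset.mem_coe.2 hb2) hne with h | h
      · exact Or.inl (hfmono b1 hb1 b2 hb2 h)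
      · exact Or.inr (hfmono b2 hb2 b1 hb1 h)
  -- characterization of the fiber
  have hchar : ∀ C : Finset T, IsChain (· ≤ ·) (C : Set T) → ⊥ ∈ C → ⊤ ∈ C →
      (alphaB C * alphaB B = f ↔ (A ⊆ C ∧ C ⊆ U)) := by
    intro C hC hbC htC
    constructor
    · intro heq
      have hCb : ∀ b ∈ B, alphaB C b = f b := by
        intro b hb
        rw [← heq, End_mul_apply, alphaB_fixed hB htB hb]
      constructor
      · intro a ha
        rw [hAdef, Finset.mem_image] at ha
        obtain ⟨b, hb, rfl⟩ := ha
        rw [← hCb b hb]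
        exact alphaB_mem hC htC
      · intro c hc
        rw [hUdef, Finset.mem_filter]
        refine ⟨Finset.mem_univ _, fun b hb hbc => ?_⟩
        rw [← hCb b hb]
        exact alphaB_le hc hbc
    · rintro ⟨hAC, hCU⟩
      funext t
      rw [End_mul_apply]
      have hb : alphaB B t ∈ B := alphaB_mem hB htB
      have h1 : alphaB C (alphaB B t) = f (alphaB B t) := by
        apply le_antisymm
        · refine alphaB_le (hAC ?_) (hfge _ hb)
          rw [hAdef, Finset.mem_image]
          exact ⟨_, hb, rfl⟩
        · have hcm : alphaB C (alphaB B t) ∈ U := hCU (alphaB_mem hC htC)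
          rw [hUdef, Finset.mem_filter] at hcm
          exact hcm.2 _ hb (le_alphaB hC htC)
      rw [h1, hfix]
  -- rewrite the filter
  have hfilter : univ.filter (fun C : Finset T =>
        (IsChain (· ≤ ·) (C : Set T) ∧ ⊥ ∈ C ∧ ⊤ ∈ C) ∧ alphaB C * alphaB B = f)
      = univ.filter (fun C : Finset T =>
        IsChain (· ≤ ·) (C : Set T) ∧ A ⊆ C ∧ C ⊆ U) := by
    apply Finset.filter_congr
    intro C _
    constructor
    · rintro ⟨⟨hC, hbC, htC⟩, heq⟩
      exact ⟨hC, (hchar C hC hbC htC).1 heq⟩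
    · rintro ⟨hC, hAC, hCU⟩
      have hbC : ⊥ ∈ C := hAC hbotA
      have htC : ⊤ ∈ C := hAC htopA
      exact ⟨⟨hC, hbC, htC⟩, (hchar C hC hbC htC).2 ⟨hAC, hCU⟩⟩
  rw [hfilter, IE hAchain hbotA]
  by_cases hf : f = alphaB B
  · -- the identity fiber
    rw [if_pos hf]
    have hU : U = univ := by
      rw [hUdef]
      ext c
      simp only [Finset.mem_filter, Finset.mem_univ, true_and, iff_true]
      intro b hb hbc
      have : f b = b := by
        rw [hf]
        exact alphaB_fixed hB htB hb
      rwa [this]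
    have hV : (univ \ U : Finset T) = ∅ := by rw [hU, Finset.sdiff_self]
    rw [hV, Finset.powerset_empty]
    rw [Finset.filter_singleton, if_pos]
    · simp
    · rw [Finset.union_empty]
      exact hAchain
  · -- nontrivial fiber
    rw [if_neg hf]
    -- construct b0
    set S0 : Finset T := B.filter (fun b => f b ≠ b) with hS0
    have hS0ne : S0.Nonempty := by
      by_contra hS0e
      rw [Finset.not_nonempty_iff_eq_empty, Finset.filter_eq_empty_iff] at hS0e
      apply hf
      funext t
      have h1 : f (alphaB B t) = alphaB B t := by
        have := hS0e (alphaB_mem hB htB (t := t))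
        simpa using this
      rw [← hfix t, h1]
    have hS0chain : IsChain (· ≤ ·) (S0 : Set T) :=
      IsChain.mono (by rw [Finset.coe_subset]; exact Finset.filter_subset _ _) hB
    set b0 : T := S0.inf id with hb0def
    have hb0S : b0 ∈ S0 := chain_inf_mem hS0chain hS0ne
    have hb0min : ∀ b ∈ S0, b0 ≤ b := fun b hb => Finset.inf_le hb
    have hb0B : b0 ∈ B := (Finset.mem_filter.1 hb0S).1
    have hb0ne : f b0 ≠ b0 := (Finset.mem_filter.1 hb0S).2
    have hb0lt : ¬ f b0 ≤ b0 := fun h => hb0ne (le_antisymm h (hfge b0 hb0B))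
    have hb0V : b0 ∈ (univ \ U : Finset T) := by
      rw [Finset.mem_sdiff]
      refine ⟨Finset.mem_univ _, ?_⟩
      rw [hUdef, Finset.mem_filter]
      rintro ⟨-, h⟩
      exact hb0lt (h b0 hb0B le_rfl)
    have hcomp : ∀ c ∈ (univ \ U : Finset T), b0 ≤ c := by
      intro c hc
      rw [Finset.mem_sdiff, hUdef, Finset.mem_filter] at hc
      obtain ⟨-, hc⟩ := hc
      push_neg at hc
      obtain ⟨b, hb, hbc, hfbc⟩ := hc (Finset.mem_univ _)
      rcases eq_or_ne (f b) b with he | hne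
      · exact absurd (show f b ≤ c by rw [he]; exact hbc) hfbc
      · exact (hb0min b (Finset.mem_filter.2 ⟨hb, hne⟩)).trans hbc
    have hAcomp : ∀ a ∈ A, a ≤ b0 ∨ b0 ≤ a := by
      intro a ha
      rw [hAdef, Finset.mem_image] at ha
      obtain ⟨b, hb, rfl⟩ := ha
      by_cases heq : b = b0
      · exact Or.inr (by rw [← heq]; exact hfge b hb)
      · rcases hB (Finset.mem_coe.2 hb) (Finset.mem_coe.2 hb0B) heq with h | h
        · rcases eq_or_ne (f b) b with he | hne'
          · exact Or.inl (show f b ≤ b0 by rw [he]; exact h)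
          · exact absurd (le_antisymm h (hb0min b (Finset.mem_filter.2 ⟨hb, hne'⟩))) heq
        · exact Or.inr (h.trans (hfge b hb))
    rw [toggle hb0V hcomp hAcomp, neg_zero]
end Aux3

/-- The element `e = − Σ_{B ∈ 𝒵_T} μ(B, ∞) · α_B` of the monoid algebra on the
endomorphisms of `T`, where `𝒵_T` is the set of chains of `T` containing `⊥` and `⊤`,
and `μ` is the Möbius function of the poset of chains of `T` containing `⊥`
(ordered by inclusion) with an adjoined top element `∞`. -/
noncomputable def eTot (T : Type*) [Lattice T] [Fintype T] [BoundedOrder T]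
    (k : Type*) [CommRing k] : MonoidAlgebra k (Function.End T) :=
  - ∑ B : {B : Finset T // IsChain (· ≤ ·) (B : Set T) ∧ ⊥ ∈ B ∧ ⊤ ∈ B},
      ((mu ℤ
          ((⟨B.1, B.2.1, B.2.2.1⟩ : {A : Finset T // IsChain (· ≤ ·) (A : Set T) ∧ ⊥ ∈ A}) :
            WithTop {A : Finset T // IsChain (· ≤ ·) (A : Set T) ∧ ⊥ ∈ A}) ⊤ : ℤ) : k) •
        MonoidAlgebra.of k (Function.End T) (alphaB B.1)

section Assemble
variable {T : Type*} [Lattice T] [Fintype T] [BoundedOrder T] {k : Type*} [CommRing k]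

lemma e_mul_alpha {D : Finset T} (hD : IsChain (· ≤ ·) (D : Set T)) (hbD : ⊥ ∈ D)
    (htD : ⊤ ∈ D) :
    eTot T k * MonoidAlgebra.of k (Function.End T) (alphaB D)
      = MonoidAlgebra.of k (Function.End T) (alphaB D) := by
  classical
  have hE : eTot T k = - ∑ C : {C : Finset T // IsChain (· ≤ ·) (C : Set T) ∧ ⊥ ∈ C ∧ ⊤ ∈ C},
      ((MuZ (C : Finset T) : ℤ) : k) • MonoidAlgebra.of k (Function.End T) (alphaB C.1) := by
    rw [eTot]
    congr 1
    refine Finset.sum_congr rfl fun C _ => ?_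
    rw [MuZ_coe (⟨C.1, C.2.1, C.2.2.1⟩ :
      {A : Finset T // IsChain (· ≤ ·) (A : Set T) ∧ ⊥ ∈ A})]
  rw [hE, neg_mul, Finset.sum_mul, neg_eq_iff_eq_neg]
  have hterm : ∀ C : {C : Finset T // IsChain (· ≤ ·) (C : Set T) ∧ ⊥ ∈ C ∧ ⊤ ∈ C},
      (((MuZ (C : Finset T) : ℤ) : k) • MonoidAlgebra.of k (Function.End T) (alphaB C.1))
          * MonoidAlgebra.of k (Function.End T) (alphaB D)
      = ((MuZ (C : Finset T) : ℤ) : k) •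
          MonoidAlgebra.of k (Function.End T) (alphaB C.1 * alphaB D) := by
    intro C
    rw [smul_mul_assoc, ← map_mul]
  rw [Finset.sum_congr rfl fun C _ => hterm C]
  refine MonoidAlgebra.ext (Finsupp.ext fun f => ?_)
  rw [MonoidAlgebra.coeff_sum, Finset.sum_apply']
  have happ : ∀ C : {C : Finset T // IsChain (· ≤ ·) (C : Set T) ∧ ⊥ ∈ C ∧ ⊤ ∈ C},
      (((MuZ (C : Finset T) : ℤ) : k) •
        MonoidAlgebra.of k (Function.End T) (alphaB C.1 * alphaB D)).coeff f
      = (fun C : Finset T =>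
          if alphaB C * alphaB D = f then ((MuZ C : ℤ) : k) else 0) (C : Finset T) := by
    intro C
    rw [MonoidAlgebra.coeff_smul, Finsupp.smul_apply, MonoidAlgebra.of_apply, MonoidAlgebra.coeff_single, Finsupp.single_apply, smul_eq_mul]
    by_cases h : alphaB (C : Finset T) * alphaB D = f <;> simp [h]
  rw [Finset.sum_congr rfl fun C _ => happ C]
  rw [← Finset.sum_subtype (univ.filter (fun C : Finset T =>
      IsChain (· ≤ ·) (C : Set T) ∧ ⊥ ∈ C ∧ ⊤ ∈ C)) (by intro x; simp)
      (fun C : Finset T => if alphaB C * alphaB D = f then ((MuZ C : ℤ) : k) else 0)]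
  -- pass to ℤ
  have hz := fiber_sum hD hbD htD f
  have hk := congrArg (fun z : ℤ => (z : k)) hz
  simp only [Int.cast_sum, apply_ite (fun z : ℤ => (z : k)), Int.cast_neg, Int.cast_one,
    Int.cast_zero] at hk
  have hsum : ∑ C ∈ univ.filter (fun C : Finset T =>
        IsChain (· ≤ ·) (C : Set T) ∧ ⊥ ∈ C ∧ ⊤ ∈ C),
      (if alphaB C * alphaB D = f then ((MuZ C : ℤ) : k) else 0)
      = ∑ C ∈ univ.filter (fun C : Finset T =>
        (IsChain (· ≤ ·) (C : Set T) ∧ ⊥ ∈ C ∧ ⊤ ∈ C) ∧ alphaB C * alphaB D = f),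
        ((MuZ C : ℤ) : k) := by
    rw [Finset.sum_filter, Finset.sum_filter]
    refine Finset.sum_congr rfl fun C _ => ?_
    by_cases h1 : (IsChain (· ≤ ·) (C : Set T) ∧ ⊥ ∈ C ∧ ⊤ ∈ C) <;>
      by_cases h2 : alphaB C * alphaB D = f <;> simp [h1, h2]
  rw [hsum, hk]
  rw [MonoidAlgebra.coeff_neg, Finsupp.neg_apply, MonoidAlgebra.of_apply, MonoidAlgebra.coeff_single, Finsupp.single_apply]
  by_cases hf : f = alphaB D
  · rw [if_pos hf, if_pos hf.symm]
  · rw [if_neg hf, if_neg (fun h => hf h.symm), neg_zero]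
end Assemble

/-- The element `e = − Σ_{B ∈ 𝒵_T} μ(B, ∞) · α_B` is idempotent: `e² = e`. -/
theorem eTot_idempotent
    {T : Type*} [Lattice T] [Fintype T] [BoundedOrder T]
    {k : Type*} [CommRing k] :
    eTot T k * eTot T k = eTot T k := by
  classical
  have expand : eTot T k * eTot T k
      = eTot T k * (- ∑ B : {B : Finset T // IsChain (· ≤ ·) (B : Set T) ∧ ⊥ ∈ B ∧ ⊤ ∈ B},
        ((mu ℤ
            ((⟨B.1, B.2.1, B.2.2.1⟩ : {A : Finset T // IsChain (· ≤ ·) (A : Set T) ∧ ⊥ ∈ A}) :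
              WithTop {A : Finset T // IsChain (· ≤ ·) (A : Set T) ∧ ⊥ ∈ A}) ⊤ : ℤ) : k) •
          MonoidAlgebra.of k (Function.End T) (alphaB B.1)) := rfl
  rw [expand, mul_neg, Finset.mul_sum]
  have hterm : ∀ B : {B : Finset T // IsChain (· ≤ ·) (B : Set T) ∧ ⊥ ∈ B ∧ ⊤ ∈ B},
      eTot T k * (((mu ℤ
          ((⟨B.1, B.2.1, B.2.2.1⟩ : {A : Finset T // IsChain (· ≤ ·) (A : Set T) ∧ ⊥ ∈ A}) :
            WithTop {A : Finset T // IsChain (· ≤ ·) (A : Set T) ∧ ⊥ ∈ A}) ⊤ : ℤ) : k) •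
          MonoidAlgebra.of k (Function.End T) (alphaB B.1))
      = ((mu ℤ
          ((⟨B.1, B.2.1, B.2.2.1⟩ : {A : Finset T // IsChain (· ≤ ·) (A : Set T) ∧ ⊥ ∈ A}) :
            WithTop {A : Finset T // IsChain (· ≤ ·) (A : Set T) ∧ ⊥ ∈ A}) ⊤ : ℤ) : k) •
          MonoidAlgebra.of k (Function.End T) (alphaB B.1) := by
    intro B
    rw [mul_smul_comm, e_mul_alpha B.2.1 B.2.2.1 B.2.2.2]
  rw [Finset.sum_congr rfl fun B _ => hterm B]
  rfl
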